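/- (Non-crossing basis of invariants.) Fix w ∈ ℕⁿ. The family of polynomials X_Γ, indexed by the non-crossing directed graphs Γ on {1,…,n} of multidegree w in which every edge (i,j) satisfies i < j, is linearly independent over ℤ and spans the subgroup of ℤ[u_1,…,u_n,v_1,…,v_n] generated by all X_Δ with Δ of multidegree w; hence it is a ℤ-basis of that subgroup. -/

import Mathlib

open MvPolynomial

/-- A directed multigraph on the vertex set `Fin n`: a multiset of ordered pairs
(multiple edges allowed). -/
abbrev DGraph (n : ℕ) := Multiset (Fin n × Fin n)

/-- `Γ` has no loops. -/
def DGraph.loopless {n : ℕ} (Γ : DGraph n) : Prop := ∀ e ∈ Γ, e.1 ≠ e.2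

/-- The multidegree (valence) of `Γ` at the vertex `v`: the number of edges of `Γ`
incident to `v`, counted with multiplicity. -/
def DGraph.mdeg {n : ℕ} (Γ : DGraph n) (v : Fin n) : ℕ :=
  Multiset.countP (fun e => e.1 = v) Γ + Multiset.countP (fun e => e.2 = v) Γ

/-- A perfect matching on `{1,…,n}`: a directed graph of multidegree `(1,…,1)`.
(Multidegree one everywhere forces looplessness.) -/
def DGraph.isPM {n : ℕ} (Γ : DGraph n) : Prop := ∀ v, Γ.mdeg v = 1

/-- The invariant `X_Γ = ∏_{(i,j) ∈ Γ} (u_j v_i - u_i v_j)`, where the variable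
`Sum.inl i` plays the role of `u_i` and `Sum.inr i` plays the role of `v_i`. -/
noncomputable def XG {n : ℕ} (Γ : DGraph n) : MvPolynomial (Fin n ⊕ Fin n) ℤ :=
  (Γ.map (fun e => X (Sum.inl e.2) * X (Sum.inr e.1) - X (Sum.inl e.1) * X (Sum.inr e.2))).prod

/-- Two edges with underlying vertex pairs `{a,b}` (`a<b`) and `{c,d}` (`c<d`) cross iff
`a<c<b<d` or `c<a<d<b`.  (Edges sharing a vertex never cross.) -/
def Crosses {n : ℕ} (e f : Fin n × Fin n) : Prop :=
  (min e.1 e.2 < min f.1 f.2 ∧ min f.1 f.2 < max e.1 e.2 ∧ max e.1 e.2 < max f.1 f.2) ∨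
  (min f.1 f.2 < min e.1 e.2 ∧ min e.1 e.2 < max f.1 f.2 ∧ max f.1 f.2 < max e.1 e.2)

/-- A graph is non-crossing if no two of its edges cross. -/
def Noncrossing {n : ℕ} (Γ : DGraph n) : Prop := ∀ e ∈ Γ, ∀ f ∈ Γ, ¬ Crosses e f

/-- The non-crossing graphs of multidegree `w` with increasing edges. -/
def NCGraphs (n : ℕ) (w : Fin n → ℕ) : Set (DGraph n) :=
  {Γ | Γ.loopless ∧ (∀ v, Γ.mdeg v = w v) ∧ Noncrossing Γ ∧ ∀ e ∈ Γ, e.1 < e.2}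

namespace NCB
open Sum Multiset Finsupp
variable {n : ℕ}

def odeg (Γ : DGraph n) : Fin n → ℕ := fun v => Multiset.countP (fun e => e.1 = v) Γ
def ideg (Γ : DGraph n) : Fin n → ℕ := fun v => Multiset.countP (fun e => e.2 = v) Γ
def sing (i : Fin n) : Fin n → ℕ := fun v => if i = v then 1 else 0

lemma mdeg_eq (Γ : DGraph n) (v : Fin n) : Γ.mdeg v = odeg Γ v + ideg Γ v := rfl

lemma odeg_cons (e : Fin n × Fin n) (Γ : DGraph n) :
    odeg (e ::ₘ Γ) = odeg Γ + sing e.1 := by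
  funext v; simp [odeg, sing, Multiset.countP_cons]

lemma ideg_cons (e : Fin n × Fin n) (Γ : DGraph n) :
    ideg (e ::ₘ Γ) = ideg Γ + sing e.2 := by
  funext v; simp [ideg, sing, Multiset.countP_cons]

noncomputable def DD (Γ : DGraph n) : (Fin n ⊕ Fin n) →₀ ℕ :=
  Finsupp.equivFunOnFinite.symm (Sum.elim (odeg Γ) (ideg Γ))

@[simp] lemma DD_inl (Γ : DGraph n) (v : Fin n) : DD Γ (inl v) = odeg Γ v := by
  simp [DD, Finsupp.equivFunOnFinite_symm_coe]
@[simp] lemma DD_inr (Γ : DGraph n) (v : Fin n) : DD Γ (inr v) = ideg Γ v := by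
  simp [DD, Finsupp.equivFunOnFinite_symm_coe]

noncomputable def fct (e : Fin n × Fin n) : MvPolynomial (Fin n ⊕ Fin n) ℤ :=
  X (Sum.inl e.2) * X (Sum.inr e.1) - X (Sum.inl e.1) * X (Sum.inr e.2)

lemma XG_zero : XG (0 : DGraph n) = 1 := by simp [XG]
lemma XG_cons (e : Fin n × Fin n) (Γ : DGraph n) : XG (e ::ₘ Γ) = fct e * XG Γ := by
  simp [XG, fct]

noncomputable def eA (e : Fin n × Fin n) : (Fin n ⊕ Fin n) →₀ ℕ :=
  Finsupp.single (inl e.2) 1 + Finsupp.single (inr e.1) 1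
noncomputable def eB (e : Fin n × Fin n) : (Fin n ⊕ Fin n) →₀ ℕ :=
  Finsupp.single (inl e.1) 1 + Finsupp.single (inr e.2) 1

lemma fct_eq (e : Fin n × Fin n) :
    fct e = monomial (eA e) (1 : ℤ) - monomial (eB e) 1 := by
  simp [fct, eA, eB, X, monomial_mul]

lemma DD_cons (e : Fin n × Fin n) (Γ : DGraph n) : DD (e ::ₘ Γ) = DD Γ + eB e := by
  ext x
  cases x with
  | inl v => simp [eB, odeg_cons, sing, Finsupp.single_apply, Pi.add_apply]
  | inr v => simp [eB, ideg_cons, sing, Finsupp.single_apply, Pi.add_apply]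

def ud (d : (Fin n ⊕ Fin n) →₀ ℕ) : Fin n → ℕ := fun v => d (inl v)

lemma ud_add (d d' : (Fin n ⊕ Fin n) →₀ ℕ) : ud (d + d') = ud d + ud d' := rfl
lemma ud_eA (e : Fin n × Fin n) : ud (eA e) = sing e.2 := by
  funext v; simp [ud, eA, sing, Finsupp.single_apply]
lemma ud_eB (e : Fin n × Fin n) : ud (eB e) = sing e.1 := by
  funext v; simp [ud, eB, sing, Finsupp.single_apply]
@[simp] lemma ud_DD (Γ : DGraph n) : ud (DD Γ) = odeg Γ := by funext v; simp [ud]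

lemma lex_add_right {a b c : Fin n → ℕ} (h : toLex a < toLex b) :
    toLex (a + c) < toLex (b + c) := by
  obtain ⟨i, hj, hi⟩ := h
  refine ⟨i, fun j hji => ?_, ?_⟩
  · simp only [Pi.toLex_apply, Pi.add_apply] at *
    rw [hj j hji]
  · simp only [Pi.toLex_apply, Pi.add_apply] at *
    exact Nat.add_lt_add_right hi (c i)

lemma lex_sing {O : Fin n → ℕ} {i j : Fin n} (hij : i < j) :
    toLex (O + sing j) < toLex (O + sing i) := by
  refine ⟨i, fun k hk => ?_, ?_⟩
  · simp only [Pi.toLex_apply, Pi.add_apply, sing] at *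
    rw [if_neg (by intro h; subst h; exact absurd (hk.trans hij) (lt_irrefl _)),
        if_neg (by intro h; subst h; exact absurd hk (lt_irrefl _))]
  · simp only [Pi.toLex_apply, Pi.add_apply, sing] at *
    rw [if_neg (fun h => absurd h.symm (ne_of_lt hij))]
    simp

lemma fct_mul_coeff (e : Fin n × Fin n) (p : MvPolynomial (Fin n ⊕ Fin n) ℤ)
    (d : (Fin n ⊕ Fin n) →₀ ℕ) :
    coeff d (fct e * p) =
      (if eA e ≤ d then coeff (d - eA e) p else 0) -
      (if eB e ≤ d then coeff (d - eB e) p else 0) := by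
  have h : fct e * p = p * monomial (eA e) 1 - p * monomial (eB e) 1 := by
    rw [fct_eq]; ring
  rw [h, coeff_sub, coeff_mul_monomial', coeff_mul_monomial']
  simp

end NCB

section KeyLemmas
open Sum Multiset Finsupp MvPolynomial NCB
variable {n : ℕ}

lemma key (Γ : DGraph n) (hinc : ∀ e ∈ Γ, e.1 < e.2) (d : (Fin n ⊕ Fin n) →₀ ℕ)
    (hne : coeff d (XG Γ) ≠ 0) :
    toLex (ud d) < toLex (odeg Γ) ∨ d = DD Γ := by
  induction Γ using Multiset.induction_on generalizing d with
  | empty =>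
    right
    rw [XG_zero, coeff_one] at hne
    have hd : d = 0 := by
      by_contra h
      rw [if_neg (fun h0 => h h0.symm)] at hne
      exact hne rfl
    have : DD (0 : DGraph n) = 0 := by
      ext x; cases x <;> simp [odeg, ideg]
    rw [hd, this]
  | cons e Γ ih =>
    have he : e.1 < e.2 := hinc e (Multiset.mem_cons_self e Γ)
    have hinc' : ∀ f ∈ Γ, f.1 < f.2 := fun f hf => hinc f (Multiset.mem_cons_of_mem hf)
    rw [XG_cons, fct_mul_coeff] at hne
    by_cases hA : (if eA e ≤ d then coeff (d - eA e) (XG Γ) else 0) ≠ 0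
    · rw [ne_eq, ite_eq_right_iff, not_forall] at hA
      obtain ⟨hle, hc⟩ := hA
      have hud : ud d = ud (d - eA e) + sing e.2 := by
        rw [← ud_eA e, ← ud_add, tsub_add_cancel_of_le hle]
      left
      have step : toLex (odeg Γ + sing e.2) < toLex (odeg (e ::ₘ Γ)) := by
        rw [odeg_cons]; exact lex_sing he
      rcases ih hinc' _ hc with h | h
      · have := lex_add_right (c := sing e.2) h
        rw [← hud] at this
        exact lt_trans this step
      · have : ud (d - eA e) = odeg Γ := by rw [h, ud_DD]
        rw [hud, this]
        exact step
    · have hB : (if eB e ≤ d then coeff (d - eB e) (XG Γ) else 0) ≠ 0 := by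
        intro h0
        rw [not_not] at hA
        rw [hA, h0, sub_zero] at hne
        exact hne rfl
      rw [ne_eq, ite_eq_right_iff, not_forall] at hB
      obtain ⟨hle, hc⟩ := hB
      have hd : d = (d - eB e) + eB e := (tsub_add_cancel_of_le hle).symm
      have hud : ud d = ud (d - eB e) + sing e.1 := by
        rw [← ud_eB e, ← ud_add, tsub_add_cancel_of_le hle]
      rcases ih hinc' _ hc with h | h
      · left
        have := lex_add_right (c := sing e.1) h
        rw [← hud, ← odeg_cons] at this
        exact this
      · right
        rw [hd, h, DD_cons]

lemma lead (Γ : DGraph n) (hinc : ∀ e ∈ Γ, e.1 < e.2) :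
    coeff (DD Γ) (XG Γ) = (-1 : ℤ) ^ (Multiset.card Γ) := by
  induction Γ using Multiset.induction_on with
  | empty =>
    have : DD (0 : DGraph n) = 0 := by ext x; cases x <;> simp [odeg, ideg]
    simp [XG_zero, this]
  | cons e Γ ih =>
    have he : e.1 < e.2 := hinc e (Multiset.mem_cons_self e Γ)
    have hinc' : ∀ f ∈ Γ, f.1 < f.2 := fun f hf => hinc f (Multiset.mem_cons_of_mem hf)
    rw [XG_cons, fct_mul_coeff, DD_cons]
    have hB : eB e ≤ DD Γ + eB e := le_add_self
    have hBc : DD Γ + eB e - eB e = DD Γ := by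
      ext x; simp [Finsupp.tsub_apply, Finsupp.add_apply]
    have hA : (if eA e ≤ DD Γ + eB e then coeff (DD Γ + eB e - eA e) (XG Γ) else 0) = 0 := by
      split_ifs with h
      · by_contra hc
        have hlt : toLex (odeg Γ) < toLex (ud (DD Γ + eB e - eA e)) := by
          refine ⟨e.1, fun k hk => ?_, ?_⟩
          · simp only [Pi.toLex_apply, ud, Finsupp.tsub_apply, Finsupp.add_apply, DD_inl]
            have h1 : eB e (inl k) = 0 := by
              simp [eB, Finsupp.single_apply]
              intro hh; exact absurd hh (ne_of_gt hk)
            have h2 : eA e (inl k) = 0 := by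
              simp [eA, Finsupp.single_apply]
              intro hh; subst hh; exact absurd (hk.trans he) (lt_irrefl _)
            rw [h1, h2]; simp
          · simp only [Pi.toLex_apply, ud, Finsupp.tsub_apply, Finsupp.add_apply, DD_inl]
            have h1 : eB e (inl e.1) = 1 := by simp [eB, Finsupp.single_apply]
            have h2 : eA e (inl e.1) = 0 := by
              simp [eA, Finsupp.single_apply]
              exact fun hh => absurd hh.symm (ne_of_lt he)
            rw [h1, h2]; omega
        rcases key Γ hinc' _ hc with hlt2 | heq
        · exact absurd hlt (lt_asymm hlt2)
        · rw [heq, ud_DD] at hlt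
          exact absurd hlt (lt_irrefl _)
      · rfl
    rw [hA, if_pos hB, hBc, ih hinc']
    rw [Multiset.card_cons]
    ring
end KeyLemmas

section Unique
open Sum Multiset Finsupp MvPolynomial NCB
variable {n : ℕ}

lemma card_eq_sum_odeg (Γ : DGraph n) : Multiset.card Γ = ∑ v : Fin n, odeg Γ v := by
  induction Γ using Multiset.induction_on with
  | empty => simp [odeg]
  | cons e Γ ih =>
    rw [Multiset.card_cons, odeg_cons, ih]
    have h1 : ∑ v : Fin n, sing e.1 v = 1 := by
      simp [sing, Finset.sum_ite_eq]
    simp only [Pi.add_apply]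
    rw [Finset.sum_add_distrib, h1]

lemma odeg_pos_iff {Γ : DGraph n} {v : Fin n} : 0 < odeg Γ v ↔ ∃ e ∈ Γ, e.1 = v :=
  Multiset.countP_pos

lemma ideg_pos_iff {Γ : DGraph n} {v : Fin n} : 0 < ideg Γ v ↔ ∃ e ∈ Γ, e.2 = v :=
  Multiset.countP_pos

lemma canon_mem (Γ : DGraph n) (hnc : Noncrossing Γ) (hinc : ∀ e ∈ Γ, e.1 < e.2)
    {i j : Fin n} (hj : 0 < ideg Γ j) (hjmin : ∀ v, 0 < ideg Γ v → j ≤ v)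
    (hij : i < j) (hi : 0 < odeg Γ i) (himax : ∀ v, 0 < odeg Γ v → v < j → v ≤ i) :
    (i, j) ∈ Γ := by
  obtain ⟨e1, he1, he1i⟩ := odeg_pos_iff.1 hi
  have hit : i < e1.2 := he1i ▸ hinc e1 he1
  have htj : j ≤ e1.2 := hjmin _ (ideg_pos_iff.2 ⟨e1, he1, rfl⟩)
  by_cases htj' : e1.2 = j
  · have : (i, j) = e1 := by rw [← he1i, ← htj']
    exact this ▸ he1
  · have htj2 : j < e1.2 := lt_of_le_of_ne htj (Ne.symm htj')
    obtain ⟨e2, he2, he2j⟩ := ideg_pos_iff.1 hj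
    have hs : e2.1 < j := he2j ▸ hinc e2 he2
    have hsi : e2.1 ≤ i := himax e2.1 (odeg_pos_iff.2 ⟨e2, he2, rfl⟩) hs
    by_cases hsi' : e2.1 = i
    · have : (i, j) = e2 := by rw [← hsi', ← he2j]
      exact this ▸ he2
    · have hsilt : e2.1 < i := lt_of_le_of_ne hsi hsi'
      exfalso
      apply hnc e2 he2 e1 he1
      left
      have m2 : min e2.1 e2.2 = e2.1 := min_eq_left (le_of_lt (hinc e2 he2))
      have M2 : max e2.1 e2.2 = e2.2 := max_eq_right (le_of_lt (hinc e2 he2))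
      have m1 : min e1.1 e1.2 = e1.1 := min_eq_left (le_of_lt (hinc e1 he1))
      have M1 : max e1.1 e1.2 = e1.2 := max_eq_right (le_of_lt (hinc e1 he1))
      rw [m1, m2, M1, M2, he1i, he2j]
      exact ⟨hsilt, hij, htj2⟩

lemma unique_aux : ∀ N (Γ Γ' : DGraph n), Multiset.card Γ = N →
    Noncrossing Γ → Noncrossing Γ' →
    (∀ e ∈ Γ, e.1 < e.2) → (∀ e ∈ Γ', e.1 < e.2) →
    odeg Γ = odeg Γ' → ideg Γ = ideg Γ' → Γ = Γ' := by
  intro N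
  induction N using Nat.strong_induction_on with
  | _ N ih =>
    intro Γ Γ' hcard hnc hnc' hinc hinc' ho hi
    by_cases h0 : Γ = 0
    · subst h0
      have : Multiset.card Γ' = 0 := by
        rw [card_eq_sum_odeg, ← ho]
        simp [odeg]
      exact (Multiset.card_eq_zero.1 this).symm
    · obtain ⟨e, he⟩ := Multiset.exists_mem_of_ne_zero h0
      have hTne : (Finset.univ.filter (fun v => 0 < ideg Γ v)).Nonempty :=
        ⟨e.2, by simp [ideg_pos_iff.2 ⟨e, he, rfl⟩]⟩
      set j := (Finset.univ.filter (fun v => 0 < ideg Γ v)).min' hTne with hjdef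
      have hj : 0 < ideg Γ j := by
        have := Finset.min'_mem _ hTne
        simpa using this
      have hjmin : ∀ v, 0 < ideg Γ v → j ≤ v := fun v hv =>
        Finset.min'_le _ v (by simpa using hv)
      obtain ⟨e2, he2, he2j⟩ := ideg_pos_iff.1 hj
      have hSne : (Finset.univ.filter (fun v => 0 < odeg Γ v ∧ v < j)).Nonempty :=
        ⟨e2.1, by
          simp only [Finset.mem_filter, Finset.mem_univ, true_and]
          exact ⟨odeg_pos_iff.2 ⟨e2, he2, rfl⟩, he2j ▸ hinc e2 he2⟩⟩
      set i := (Finset.univ.filter (fun v => 0 < odeg Γ v ∧ v < j)).max' hSne with hidef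
      have hiP : 0 < odeg Γ i ∧ i < j := by
        have h := Finset.max'_mem _ hSne
        rw [Finset.mem_filter] at h
        exact h.2
      have himax : ∀ v, 0 < odeg Γ v → v < j → v ≤ i := fun v h1 h2 =>
        Finset.le_max' _ v (by simp [h1, h2])
      have hm : (i, j) ∈ Γ := canon_mem Γ hnc hinc hj hjmin hiP.2 hiP.1 himax
      have hm' : (i, j) ∈ Γ' := by
        refine canon_mem Γ' hnc' hinc' (hi ▸ hj) (fun v hv => hjmin v (by rw [hi]; exact hv))
          hiP.2 (by rw [← ho]; exact hiP.1) (fun v h1 h2 => himax v (by rw [ho]; exact h1) h2)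
      have hG : Γ = (i, j) ::ₘ Γ.erase (i, j) := (Multiset.cons_erase hm).symm
      have hG' : Γ' = (i, j) ::ₘ Γ'.erase (i, j) := (Multiset.cons_erase hm').symm
      have hcard0 : Multiset.card (Γ.erase (i, j)) < N := by
        have h1 : Multiset.card (Γ.erase (i, j)) = Multiset.card Γ - 1 :=
          Multiset.card_erase_of_mem hm
        have h2 : 0 < Multiset.card Γ := Multiset.card_pos_iff_exists_mem.2 ⟨_, hm⟩
        omega
      have h00 : Γ.erase (i, j) = Γ'.erase (i, j) := by
        refine ih _ hcard0 _ _ rfl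
          (fun a ha b hb => hnc a (Multiset.mem_of_mem_erase ha) b (Multiset.mem_of_mem_erase hb))
          (fun a ha b hb => hnc' a (Multiset.mem_of_mem_erase ha) b (Multiset.mem_of_mem_erase hb))
          (fun a ha => hinc a (Multiset.mem_of_mem_erase ha))
          (fun a ha => hinc' a (Multiset.mem_of_mem_erase ha)) ?_ ?_
        · funext v
          have h1 := congrFun ho v
          rw [hG, hG', odeg_cons, odeg_cons] at h1
          simpa using h1
        · funext v
          have h1 := congrFun hi v
          rw [hG, hG', ideg_cons, ideg_cons] at h1
          simpa using h1
      rw [hG, hG', h00]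
end Unique

section Span
open Sum Multiset Finsupp MvPolynomial NCB
variable {n : ℕ}

lemma fct_pluck (a b c d : Fin n) :
    fct (a, c) * fct (b, d) = fct (a, b) * fct (c, d) + fct (a, d) * fct (b, c) := by
  simp only [fct]
  ring

lemma XG_pluck (a b c d : Fin n) (Δ₀ : DGraph n) :
    XG ((a, c) ::ₘ (b, d) ::ₘ Δ₀) =
      XG ((a, b) ::ₘ (c, d) ::ₘ Δ₀) + XG ((a, d) ::ₘ (b, c) ::ₘ Δ₀) := by
  simp only [XG_cons]
  rw [← mul_assoc, fct_pluck, add_mul, mul_assoc, mul_assoc]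

lemma mdeg_cons (e : Fin n × Fin n) (Γ : DGraph n) (v : Fin n) :
    DGraph.mdeg (e ::ₘ Γ) v = (if e.1 = v then 1 else 0) + (if e.2 = v then 1 else 0) + Γ.mdeg v := by
  simp only [DGraph.mdeg, Multiset.countP_cons]
  ring

lemma mdeg_perm (a b c d : Fin n) (Δ₀ : DGraph n) (v : Fin n) :
    DGraph.mdeg ((a, b) ::ₘ (c, d) ::ₘ Δ₀) v = DGraph.mdeg ((a, c) ::ₘ (b, d) ::ₘ Δ₀) v := by
  simp only [mdeg_cons]
  ring

def S1 (Γ : DGraph n) : ℕ := (Γ.map (fun e => e.2.val - e.1.val)).sum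
def S2f (Γ : DGraph n) : ℕ := (Γ.map (fun e => (e.2.val - e.1.val) ^ 2)).sum

lemma S1_cons (e : Fin n × Fin n) (Γ : DGraph n) :
    S1 (e ::ₘ Γ) = (e.2.val - e.1.val) + S1 Γ := by simp [S1]
lemma S2f_cons (e : Fin n × Fin n) (Γ : DGraph n) :
    S2f (e ::ₘ Γ) = (e.2.val - e.1.val) ^ 2 + S2f Γ := by simp [S2f]

lemma S2f_le (Γ : DGraph n) : S2f Γ ≤ n ^ 2 * Multiset.card Γ := by
  have h : ∀ x ∈ Γ.map (fun e => (e.2.val - e.1.val) ^ 2), x ≤ n ^ 2 := by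
    intro x hx
    obtain ⟨e, _, rfl⟩ := Multiset.mem_map.1 hx
    have h1 : e.2.val - e.1.val ≤ n := le_trans (Nat.sub_le _ _) (le_of_lt e.2.isLt)
    exact Nat.pow_le_pow_left h1 2
  calc S2f Γ ≤ Multiset.card (Γ.map (fun e => (e.2.val - e.1.val) ^ 2)) • n ^ 2 :=
        Multiset.sum_le_card_nsmul _ _ h
    _ = n ^ 2 * Multiset.card Γ := by rw [Multiset.card_map, smul_eq_mul, mul_comm]

def meas (Γ : DGraph n) : ℕ :=
  (n ^ 2 * Multiset.card Γ + 1) * S1 Γ + (n ^ 2 * Multiset.card Γ - S2f Γ)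

lemma meas1 {a b c d : Fin n} (Δ₀ : DGraph n) (hab : a < b) (hbc : b < c) (hcd : c < d) :
    meas ((a, b) ::ₘ (c, d) ::ₘ Δ₀) < meas ((a, c) ::ₘ (b, d) ::ₘ Δ₀) := by
  have hA : a.val < b.val := hab
  have hB : b.val < c.val := hbc
  have hC : c.val < d.val := hcd
  have hcard : Multiset.card ((a, b) ::ₘ (c, d) ::ₘ Δ₀) =
      Multiset.card ((a, c) ::ₘ (b, d) ::ₘ Δ₀) := by simp
  set M := n ^ 2 * Multiset.card ((a, c) ::ₘ (b, d) ::ₘ Δ₀) with hM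
  have hs1 : S1 ((a, b) ::ₘ (c, d) ::ₘ Δ₀) + 2 ≤ S1 ((a, c) ::ₘ (b, d) ::ₘ Δ₀) := by
    simp only [S1_cons]
    omega
  calc meas ((a, b) ::ₘ (c, d) ::ₘ Δ₀)
      = (M + 1) * S1 ((a, b) ::ₘ (c, d) ::ₘ Δ₀) +
        (M - S2f ((a, b) ::ₘ (c, d) ::ₘ Δ₀)) := by rw [meas, hcard]
    _ ≤ (M + 1) * S1 ((a, b) ::ₘ (c, d) ::ₘ Δ₀) + M :=
        Nat.add_le_add_left (Nat.sub_le _ _) _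
    _ < (M + 1) * S1 ((a, b) ::ₘ (c, d) ::ₘ Δ₀) + 2 * (M + 1) :=
        Nat.add_lt_add_left (by omega) _
    _ = (M + 1) * (S1 ((a, b) ::ₘ (c, d) ::ₘ Δ₀) + 2) := by ring
    _ ≤ (M + 1) * S1 ((a, c) ::ₘ (b, d) ::ₘ Δ₀) := Nat.mul_le_mul_left _ hs1
    _ ≤ meas ((a, c) ::ₘ (b, d) ::ₘ Δ₀) := by rw [meas]; exact Nat.le_add_right _ _

lemma meas2 {a b c d : Fin n} (Δ₀ : DGraph n) (hab : a < b) (hbc : b < c) (hcd : c < d) :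
    meas ((a, d) ::ₘ (b, c) ::ₘ Δ₀) < meas ((a, c) ::ₘ (b, d) ::ₘ Δ₀) := by
  have hA : a.val < b.val := hab
  have hB : b.val < c.val := hbc
  have hC : c.val < d.val := hcd
  have hcard : Multiset.card ((a, d) ::ₘ (b, c) ::ₘ Δ₀) =
      Multiset.card ((a, c) ::ₘ (b, d) ::ₘ Δ₀) := by simp
  set M := n ^ 2 * Multiset.card ((a, c) ::ₘ (b, d) ::ₘ Δ₀) with hM
  have hs1 : S1 ((a, d) ::ₘ (b, c) ::ₘ Δ₀) = S1 ((a, c) ::ₘ (b, d) ::ₘ Δ₀) := by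
    simp only [S1_cons]
    omega
  have hs2 : S2f ((a, c) ::ₘ (b, d) ::ₘ Δ₀) + 2 ≤ S2f ((a, d) ::ₘ (b, c) ::ₘ Δ₀) := by
    simp only [S2f_cons]
    have e1 : c.val - a.val = (b.val - a.val) + (c.val - b.val) := by omega
    have e2 : d.val - b.val = (c.val - b.val) + (d.val - c.val) := by omega
    have e3 : d.val - a.val = (b.val - a.val) + (c.val - b.val) + (d.val - c.val) := by omega
    rw [e1, e2, e3]
    have hx : 1 ≤ b.val - a.val := by omega
    have hz : 1 ≤ d.val - c.val := by omega
    nlinarith [Nat.mul_le_mul hx hz]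
  have hs2b : S2f ((a, d) ::ₘ (b, c) ::ₘ Δ₀) ≤ M := by
    rw [hM, ← hcard]
    exact S2f_le _
  have hlt : M - S2f ((a, d) ::ₘ (b, c) ::ₘ Δ₀) < M - S2f ((a, c) ::ₘ (b, d) ::ₘ Δ₀) := by
    omega
  calc meas ((a, d) ::ₘ (b, c) ::ₘ Δ₀)
      = (M + 1) * S1 ((a, c) ::ₘ (b, d) ::ₘ Δ₀) +
        (M - S2f ((a, d) ::ₘ (b, c) ::ₘ Δ₀)) := by rw [meas, hcard, hs1]
    _ < (M + 1) * S1 ((a, c) ::ₘ (b, d) ::ₘ Δ₀) +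
        (M - S2f ((a, c) ::ₘ (b, d) ::ₘ Δ₀)) := Nat.add_lt_add_left hlt _
    _ = meas ((a, c) ::ₘ (b, d) ::ₘ Δ₀) := by rw [meas]

lemma straighten (w : Fin n → ℕ) : ∀ N, ∀ Δ : DGraph n, meas Δ ≤ N →
    (∀ e ∈ Δ, e.1 < e.2) → (∀ v, DGraph.mdeg Δ v = w v) →
    XG Δ ∈ Submodule.span ℤ (Set.range fun (Γ : NCGraphs n w) => XG Γ.val) := by
  intro N
  induction N using Nat.strong_induction_on with
  | _ N ih =>
    intro Δ hm hinc hdeg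
    by_cases hnc : Noncrossing Δ
    · have hmem : Δ ∈ NCGraphs n w := ⟨fun e he => ne_of_lt (hinc e he), hdeg, hnc, hinc⟩
      exact Submodule.subset_span ⟨⟨Δ, hmem⟩, rfl⟩
    · have hnc2 : ∃ e ∈ Δ, ∃ f ∈ Δ, Crosses e f := by
        by_contra h
        push_neg at h
        exact hnc (fun e he f hf => h e he f hf)
      obtain ⟨e, he, f, hf, hcr⟩ := hnc2
      have main : ∀ x y : Fin n × Fin n, x ∈ Δ → y ∈ Δ → x.1 < y.1 → y.1 < x.2 → x.2 < y.2 →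
          XG Δ ∈ Submodule.span ℤ (Set.range fun (Γ : NCGraphs n w) => XG Γ.val) := by
        intro x y hx hy h1 h2 h3
        have hxy : y ≠ x := by
          intro h
          rw [h] at h1
          exact absurd h2 (by omega)
        set Δ₀ := (Δ.erase x).erase y with hΔ₀
        have hy' : y ∈ Δ.erase x := (Multiset.mem_erase_of_ne hxy).2 hy
        have hΔeq : Δ = x ::ₘ y ::ₘ Δ₀ := by
          rw [hΔ₀, Multiset.cons_erase hy', Multiset.cons_erase hx]
        have hxx : x = (x.1, x.2) := rfl
        have hyy : y = (y.1, y.2) := rfl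
        have hΔeq2 : Δ = (x.1, x.2) ::ₘ (y.1, y.2) ::ₘ Δ₀ := by rw [← hxx, ← hyy]; exact hΔeq
        have hd0 : ∀ g ∈ Δ₀, g ∈ Δ := fun g hg =>
          Multiset.mem_of_mem_erase (Multiset.mem_of_mem_erase hg)
        have hx12 : x.1 < x.2 := hinc x hx
        have hy12 : y.1 < y.2 := hinc y hy
        -- a := x.1, b := y.1, c := x.2, d := y.2, with a < b < c < d
        have hXG : XG Δ = XG ((x.1, y.1) ::ₘ (x.2, y.2) ::ₘ Δ₀) +
            XG ((x.1, y.2) ::ₘ (y.1, x.2) ::ₘ Δ₀) := by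
          rw [hΔeq2]
          exact XG_pluck x.1 y.1 x.2 y.2 Δ₀
        have hinc1 : ∀ g ∈ (x.1, y.1) ::ₘ (x.2, y.2) ::ₘ Δ₀, g.1 < g.2 := by
          intro g hg
          rcases Multiset.mem_cons.1 hg with rfl | hg
          · exact h1
          · rcases Multiset.mem_cons.1 hg with rfl | hg
            · exact h3
            · exact hinc g (hd0 g hg)
        have hinc2 : ∀ g ∈ (x.1, y.2) ::ₘ (y.1, x.2) ::ₘ Δ₀, g.1 < g.2 := by
          intro g hg
          rcases Multiset.mem_cons.1 hg with rfl | hg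
          · exact lt_trans h1 (lt_trans h2 h3)
          · rcases Multiset.mem_cons.1 hg with rfl | hg
            · exact h2
            · exact hinc g (hd0 g hg)
        have hdeg1 : ∀ v, DGraph.mdeg ((x.1, y.1) ::ₘ (x.2, y.2) ::ₘ Δ₀) v = w v := by
          intro v
          rw [mdeg_perm, ← hΔeq2]
          exact hdeg v
        have hdeg2 : ∀ v, DGraph.mdeg ((x.1, y.2) ::ₘ (y.1, x.2) ::ₘ Δ₀) v = w v := by
          intro v
          have : DGraph.mdeg ((x.1, y.2) ::ₘ (y.1, x.2) ::ₘ Δ₀) v =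
              DGraph.mdeg ((x.1, x.2) ::ₘ (y.1, y.2) ::ₘ Δ₀) v := by
            simp only [mdeg_cons]
            ring
          rw [this, ← hΔeq2]
          exact hdeg v
        have hm1 : meas ((x.1, y.1) ::ₘ (x.2, y.2) ::ₘ Δ₀) < N :=
          lt_of_lt_of_le (by rw [hΔeq2]; exact meas1 Δ₀ h1 h2 h3) hm
        have hm2 : meas ((x.1, y.2) ::ₘ (y.1, x.2) ::ₘ Δ₀) < N :=
          lt_of_lt_of_le (by rw [hΔeq2]; exact meas2 Δ₀ h1 h2 h3) hm
        rw [hXG]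
        exact Submodule.add_mem _
          (ih _ hm1 _ (le_refl _) hinc1 hdeg1)
          (ih _ hm2 _ (le_refl _) hinc2 hdeg2)
      have hee : e.1 < e.2 := hinc e he
      have hff : f.1 < f.2 := hinc f hf
      have me : min e.1 e.2 = e.1 := min_eq_left (le_of_lt hee)
      have Me : max e.1 e.2 = e.2 := max_eq_right (le_of_lt hee)
      have mf : min f.1 f.2 = f.1 := min_eq_left (le_of_lt hff)
      have Mf : max f.1 f.2 = f.2 := max_eq_right (le_of_lt hff)
      rcases hcr with ⟨h1, h2, h3⟩ | ⟨h1, h2, h3⟩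
      · rw [me, mf] at h1
        rw [mf, Me] at h2
        rw [Me, Mf] at h3
        exact main e f he hf h1 h2 h3
      · rw [mf, me] at h1
        rw [me, Mf] at h2
        rw [Mf, Me] at h3
        exact main f e hf he h1 h2 h3
end Span

section Final
open Sum Multiset Finsupp MvPolynomial NCB
variable {n : ℕ}

lemma flip_graph (Δ : DGraph n) (h : Δ.loopless) :
    ∃ Δ' : DGraph n, (∀ e ∈ Δ', e.1 < e.2) ∧ (∀ v, DGraph.mdeg Δ' v = DGraph.mdeg Δ v) ∧
      (XG Δ = XG Δ' ∨ XG Δ = -XG Δ') := by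
  induction Δ using Multiset.induction_on with
  | empty => exact ⟨0, by simp, fun v => rfl, Or.inl rfl⟩
  | cons e Δ ih =>
    have hl : DGraph.loopless Δ := fun g hg => h g (Multiset.mem_cons_of_mem hg)
    obtain ⟨Δ', h1, h2, h3⟩ := ih hl
    have hne : e.1 ≠ e.2 := h e (Multiset.mem_cons_self e Δ)
    rcases lt_or_gt_of_ne hne with hlt | hgt
    · refine ⟨e ::ₘ Δ', ?_, ?_, ?_⟩
      · intro g hg
        rcases Multiset.mem_cons.1 hg with rfl | hg
        · exact hlt
        · exact h1 g hg
      · intro v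
        rw [mdeg_cons, mdeg_cons, h2]
      · rw [XG_cons, XG_cons]
        rcases h3 with h3 | h3
        · left; rw [h3]
        · right; rw [h3]; ring
    · refine ⟨(e.2, e.1) ::ₘ Δ', ?_, ?_, ?_⟩
      · intro g hg
        rcases Multiset.mem_cons.1 hg with rfl | hg
        · exact hgt
        · exact h1 g hg
      · intro v
        rw [mdeg_cons, mdeg_cons, h2]
        ring
      · have hfct : fct e = -fct (e.2, e.1) := by simp only [fct]; ring
        rw [XG_cons, XG_cons, hfct]
        rcases h3 with h3 | h3
        · right; rw [h3]; ring
        · left; rw [h3]; ring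
end Final


/-- **Non-crossing basis of invariants.** For any `w ∈ ℕⁿ`, the family of polynomials
`X_Γ`, indexed by the non-crossing directed graphs `Γ` of multidegree `w` whose edges
`(i,j)` all satisfy `i < j`, is `ℤ`-linearly independent and spans the subgroup generated
by all `X_Δ` of multidegree `w`; hence it is a `ℤ`-basis of that subgroup. -/
theorem noncrossing_basis (n : ℕ) (w : Fin n → ℕ) :
    LinearIndependent ℤ (fun Γ : NCGraphs n w => XG Γ.val) ∧
    Submodule.span ℤ (Set.range (fun Γ : NCGraphs n w => XG Γ.val)) =
      Submodule.span ℤ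
        {p | ∃ Δ : DGraph n, Δ.loopless ∧ (∀ v, Δ.mdeg v = w v) ∧ p = XG Δ} := by
  constructor
  · rw [linearIndependent_iff']
    intro s g hsum Γi hΓi
    by_contra hgne
    classical
    set t := s.filter (fun Γ => g Γ ≠ 0) with ht
    have htne : t.Nonempty := ⟨Γi, Finset.mem_filter.2 ⟨hΓi, hgne⟩⟩
    obtain ⟨m, hmt, hmax⟩ : ∃ m ∈ t.image (fun Γ => toLex (NCB.odeg Γ.val)),
        ∀ x ∈ t.image (fun Γ => toLex (NCB.odeg Γ.val)), ¬ m < x := by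
      obtain ⟨m, hm⟩ := Finset.exists_maximal (htne.image (fun Γ => toLex (NCB.odeg Γ.val)))
      exact ⟨m, hm.1, fun x hx hlt => lt_irrefl _ (hlt.trans_le (hm.2 hx hlt.le))⟩
    rw [Finset.mem_image] at hmt
    obtain ⟨Γs, hΓst, hΓsm⟩ := hmt
    have hmax' : ∀ x ∈ t, ¬ toLex (NCB.odeg Γs.val) < toLex (NCB.odeg x.val) := by
      intro x hx hlt
      exact hmax _ (Finset.mem_image_of_mem _ hx) (hΓsm ▸ hlt)
    have hΓss : Γs ∈ s := (Finset.mem_filter.1 hΓst).1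
    have hcoeff : ∀ b ∈ s, b ≠ Γs →
        g b • MvPolynomial.coeff (NCB.DD Γs.val) (XG b.val) = 0 := by
      intro b hb hbne
      by_cases hgb : g b = 0
      · simp [hgb]
      · have hbt : b ∈ t := Finset.mem_filter.2 ⟨hb, hgb⟩
        have hbP := b.2
        have hsP := Γs.2
        have hc0 : MvPolynomial.coeff (NCB.DD Γs.val) (XG b.val) = 0 := by
          by_contra hc
          rcases key b.val hbP.2.2.2 _ hc with hlt | heq
          · rw [NCB.ud_DD] at hlt
            exact hmax' b hbt hlt
          · have ho : NCB.odeg Γs.val = NCB.odeg b.val := by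
              funext v
              have h := congrArg (fun F => F (Sum.inl v)) heq
              simpa using h
            have hii : NCB.ideg Γs.val = NCB.ideg b.val := by
              funext v
              have h := congrArg (fun F => F (Sum.inr v)) heq
              simpa using h
            have heq2 : Γs.val = b.val :=
              unique_aux (Multiset.card Γs.val) Γs.val b.val rfl
                hsP.2.2.1 hbP.2.2.1 hsP.2.2.2 hbP.2.2.2 ho hii
            exact hbne (Subtype.ext heq2.symm)
        rw [hc0]
        simp
    have hs2 : ∑ i ∈ s, g i • MvPolynomial.coeff (NCB.DD Γs.val) (XG i.val) = 0 := by
      have h0 : MvPolynomial.coeff (NCB.DD Γs.val) (∑ i ∈ s, g i • XG i.val) = 0 := by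
        rw [hsum]; simp
      rw [MvPolynomial.coeff_sum] at h0
      simp only [MvPolynomial.coeff_smul] at h0
      exact h0
    rw [Finset.sum_eq_single_of_mem Γs hΓss hcoeff] at hs2
    rw [lead Γs.val Γs.2.2.2.2, smul_eq_mul] at hs2
    have hg0 : g Γs = 0 := by
      have hne : ((-1 : ℤ)) ^ (Multiset.card Γs.val) ≠ 0 :=
        pow_ne_zero _ (by norm_num)
      rcases mul_eq_zero.1 hs2 with h | h
      · exact h
      · exact absurd h hne
    exact (Finset.mem_filter.1 hΓst).2 hg0
  · apply le_antisymm
    · refine Submodule.span_le.2 ?_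
      rintro p ⟨Γ, rfl⟩
      exact Submodule.subset_span ⟨Γ.val, Γ.2.1, Γ.2.2.1, rfl⟩
    · refine Submodule.span_le.2 ?_
      rintro p ⟨Δ, hl, hdeg, rfl⟩
      obtain ⟨Δ', h1, h2, h3⟩ := flip_graph Δ hl
      have hdeg' : ∀ v, DGraph.mdeg Δ' v = w v := fun v => (h2 v).trans (hdeg v)
      have hmem := straighten w (meas Δ') Δ' (le_refl _) h1 hdeg'
      rcases h3 with h3 | h3
      · rw [h3]; exact hmem
      · rw [h3]; exact Submodule.neg_mem _ hmem
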